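/- Let Ric : Matrix (Fin 4) (Fin 4) ℝ (the generally non-symmetric Ricci tensor R_{ηα}, treated as an independent tensor argument) and let G : Matrix (Fin 4) (Fin 4) ℝ be symmetric with det G < 0. Define the Ricci-tensor-squared Lagrangian density L̃(Ric, G) = (1/2) ∑_{η,α,ξ,λ} Ric η α · Ric ξ λ · G η ξ · G α λ · (−det G)^{−1/2}. Then for all μ, ν ∈ Fin 4 the metric energy-momentum tensor density equals the canonical one: ∑_{β} (∂L̃/∂G_{(ν,β)}) · G μ β + ∑_{β} (∂L̃/∂G_{(β,ν)}) · G β μ = ∑_{β} (∂L̃/∂Ric_{(μ,β)}) · Ric ν β + ∑_{β} (∂L̃/∂Ric_{(β,μ)}) · Ric β ν − (if μ = ν then L̃(Ric,G) else 0). In particular the canonical energy-momentum tensor of the Ricci-squared Lagrangian is symmetric even when the Ricci tensor itself is non-symmetric. -/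

import Mathlib

/-!
The density is covariant under the general linear group: the contravariant metric transforms as
`G ↦ B G Bᵀ` and the covariant Ricci tensor as `R ↦ Bᵀ R B`, and the cyclicity of the trace gives
`L(R, B G Bᵀ) · det B = L(Bᵀ R B, G)` whenever `det B > 0`. Differentiating this along
`B = 1 + t X` at `t = 0` yields
`∂_G L (X G + G Xᵀ) + tr X · L = ∂_R L (Xᵀ R + R X)`,
and the claimed identity is the case `X = E_{νμ}`.
-/

attribute [local instance] Matrix.normedAddCommGroup Matrix.normedSpace

open Matrix Filter Topology

theorem hasDerivAt_add_smul_add_sq_smul {E : Type*} [NormedAddCommGroup E] [NormedSpace ℝ E]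
    (a b c : E) : HasDerivAt (fun t : ℝ => a + t • b + t ^ 2 • c) b 0 := by
  simpa using (((hasDerivAt_id (0 : ℝ)).smul_const b).const_add a).fun_add
    ((hasDerivAt_pow 2 (0 : ℝ)).smul_const c)

namespace Matrix

variable {n : Type*} [Fintype n] [DecidableEq n]

theorem differentiable_det : Differentiable ℝ (det : Matrix n n ℝ → ℝ) := by
  simp only [funext det_apply]
  fun_prop

open Polynomial in
theorem hasDerivAt_det_one_add_smul (X : Matrix n n ℝ) :
    HasDerivAt (fun t : ℝ => (1 + t • X).det) X.trace 0 := by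
  have h := (det (1 + (Polynomial.X : ℝ[X]) • X.map C)).hasDerivAt 0
  rw [derivative_det_one_add_X_smul] at h
  refine h.congr_of_eventuallyEq (Eventually.of_forall fun t => ?_)
  simp only [eval_det]
  congr 1
  ext i j
  simp [one_apply, mul_comm]

variable {α : Type*}

theorem one_add_smul_mul_mul_transpose [CommRing α] (X G : Matrix n n α) (t : α) :
    (1 + t • X) * G * (1 + t • X)ᵀ = G + t • (X * G + G * Xᵀ) + t ^ 2 • (X * G * Xᵀ) := by
  simp only [transpose_add, transpose_one, transpose_smul, add_mul, mul_add, Matrix.smul_mul,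
    Matrix.mul_smul, one_mul, mul_one, smul_smul, smul_add, pow_two]
  abel

theorem transpose_one_add_smul_mul_mul [CommRing α] (X R : Matrix n n α) (t : α) :
    (1 + t • X)ᵀ * R * (1 + t • X) = R + t • (Xᵀ * R + R * X) + t ^ 2 • (Xᵀ * R * X) := by
  simp only [transpose_add, transpose_one, transpose_smul, add_mul, mul_add, Matrix.smul_mul,
    Matrix.mul_smul, one_mul, mul_one, smul_smul, smul_add, pow_two]
  abel

theorem single_mul_eq_sum [Semiring α] (A : Matrix n n α) (i j : n) :
    single i j 1 * A = ∑ β, A j β • single i β 1 := by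
  ext a b
  simp [mul_apply, single_apply, Matrix.sum_apply, ite_and]

theorem mul_single_eq_sum [Semiring α] (A : Matrix n n α) (i j : n) :
    A * single i j 1 = ∑ β, A β i • single β j 1 := by
  ext a b
  simp [mul_apply, single_apply, Matrix.sum_apply, ite_and]

theorem sum_map_single_mul [CommSemiring α] (f : Matrix n n α →ₗ[α] α) (A : Matrix n n α)
    (i j : n) :
    ∑ β, f (single i β 1) * A j β = f (single i j 1 * A) := by
  simp only [single_mul_eq_sum, map_sum, map_smul, smul_eq_mul, mul_comm]

theorem sum_map_mul_single [CommSemiring α] (f : Matrix n n α →ₗ[α] α) (A : Matrix n n α)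
    (i j : n) :
    ∑ β, f (single β j 1) * A β i = f (A * single i j 1) := by
  simp only [mul_single_eq_sum, map_sum, map_smul, smul_eq_mul, mul_comm]

theorem trace_single_one [AddCommMonoidWithOne α] (i j : n) :
    (single i j (1 : α)).trace = if j = i then 1 else 0 := by
  split_ifs with h
  · rw [h, trace_single_eq_same]
  · exact trace_single_eq_of_ne _ _ _ (Ne.symm h)

end Matrix

namespace RicciSquared

variable {n : Type*} [Fintype n]

def contraction (x : Matrix n n ℝ × Matrix n n ℝ) : ℝ :=
  ∑ η, ∑ α, ∑ ξ, ∑ l, x.1 η α * x.1 ξ l * x.2 η ξ * x.2 α l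

theorem contraction_eq_trace (R G : Matrix n n ℝ) :
    contraction (R, G) = trace (Rᵀ * G * R * Gᵀ) := by
  simp only [contraction, trace, diag, mul_apply, transpose_apply, Finset.sum_mul]
  rw [Finset.sum_comm]
  refine Finset.sum_congr rfl fun α _ => ?_
  rw [Finset.sum_comm, Finset.sum_congr rfl fun ξ _ => Finset.sum_comm, Finset.sum_comm]
  exact Finset.sum_congr rfl fun _ _ => Finset.sum_congr rfl fun _ _ =>
    Finset.sum_congr rfl fun _ _ => by ring

theorem contraction_transpose_mul_mul (R G B : Matrix n n ℝ) :
    contraction (Bᵀ * R * B, G) = contraction (R, B * G * Bᵀ) := by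
  simp only [contraction_eq_trace, transpose_mul, transpose_transpose, Matrix.mul_assoc]
  rw [trace_mul_comm]
  simp only [Matrix.mul_assoc]

theorem differentiable_contraction : Differentiable ℝ (contraction (n := n)) := by
  unfold contraction
  fun_prop

variable [DecidableEq n]

noncomputable def lagrangian (x : Matrix n n ℝ × Matrix n n ℝ) : ℝ :=
  (1 / 2) * contraction x * (-x.2.det) ^ (-(1 / 2) : ℝ)

theorem lagrangian_mul_mul_transpose_mul_det (R G B : Matrix n n ℝ) (hG : G.det ≤ 0)
    (hB : 0 < B.det) : lagrangian (R, B * G * Bᵀ) * B.det = lagrangian (Bᵀ * R * B, G) := by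
  have hdet : -(B * G * Bᵀ).det = -G.det * B.det ^ 2 := by
    rw [det_mul, det_mul, det_transpose]
    ring
  have hsq : (B.det ^ 2) ^ (-(1 / 2) : ℝ) = B.det⁻¹ := by
    rw [Real.rpow_neg (by positivity), ← Real.sqrt_eq_rpow, Real.sqrt_sq hB.le]
  simp only [lagrangian, contraction_transpose_mul_mul, hdet]
  rw [Real.mul_rpow (by linarith) (by positivity), hsq]
  field_simp

theorem differentiableAt_lagrangian {x : Matrix n n ℝ × Matrix n n ℝ} (hx : x.2.det < 0) :
    DifferentiableAt ℝ lagrangian x :=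
  ((differentiable_contraction x).const_mul _).mul
    ((differentiable_det.comp differentiable_snd x).neg.rpow_const
      (Or.inl (neg_ne_zero.2 hx.ne)))

theorem fderiv_lagrangian_equivariance {R G : Matrix n n ℝ} (hG : G.det < 0) (X : Matrix n n ℝ) :
    fderiv ℝ lagrangian (R, G) (0, X * G + G * Xᵀ) + lagrangian (R, G) * X.trace
      = fderiv ℝ lagrangian (R, G) (Xᵀ * R + R * X, 0) := by
  have hL : HasFDerivAt lagrangian (fderiv ℝ lagrangian (R, G)) (R, G) :=
    (differentiableAt_lagrangian (x := (R, G)) hG).hasFDerivAt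
  have hmetric : HasDerivAt (fun t : ℝ => (R, (1 + t • X) * G * (1 + t • X)ᵀ))
      (0, X * G + G * Xᵀ) 0 := by
    refine (hasDerivAt_add_smul_add_sq_smul (R, G) (0, X * G + G * Xᵀ)
      (0, X * G * Xᵀ)).congr_of_eventuallyEq (Eventually.of_forall fun t => ?_)
    dsimp only
    rw [one_add_smul_mul_mul_transpose]
    simp
  have hricci : HasDerivAt (fun t : ℝ => ((1 + t • X)ᵀ * R * (1 + t • X), G))
      (Xᵀ * R + R * X, 0) 0 := by
    refine (hasDerivAt_add_smul_add_sq_smul (R, G) (Xᵀ * R + R * X, 0)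
      (Xᵀ * R * X, 0)).congr_of_eventuallyEq (Eventually.of_forall fun t => ?_)
    dsimp only
    rw [transpose_one_add_smul_mul_mul]
    simp
  have hdet := hasDerivAt_det_one_add_smul X
  have hpos : ∀ᶠ t in 𝓝 (0 : ℝ), 0 < (1 + t • X).det :=
    hdet.continuousAt.eventually_const_lt (by simp)
  have hleft := (hL.comp_hasDerivAt_of_eq 0 hmetric (by simp)).mul hdet
  have hright := (hL.comp_hasDerivAt_of_eq 0 hricci (by simp)).congr_of_eventuallyEq
    (hpos.mono fun t ht => lagrangian_mul_mul_transpose_mul_det R G _ hG.le ht)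
  have h := hleft.unique hright
  simp only [Function.comp_apply, zero_smul, add_zero, det_one, mul_one, one_mul,
    transpose_one] at h
  exact h

end RicciSquared

open RicciSquared

theorem ricci_squared_emt_identity_general
    (Ric G : Matrix (Fin 4) (Fin 4) ℝ) (hdet : G.det < 0)
    (L : Matrix (Fin 4) (Fin 4) ℝ × Matrix (Fin 4) (Fin 4) ℝ → ℝ)
    (hL : L = fun x =>
      (1 / 2) * (∑ η, ∑ α, ∑ ξ, ∑ l, x.1 η α * x.1 ξ l * x.2 η ξ * x.2 α l)
        * (-x.2.det) ^ (-(1 / 2) : ℝ)) :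
    ∀ μ ν : Fin 4,
      (∑ β, fderiv ℝ L (Ric, G) (0, Matrix.single ν β 1) * G μ β)
      + (∑ β, fderiv ℝ L (Ric, G) (0, Matrix.single β ν 1) * G β μ)
      = (∑ β, fderiv ℝ L (Ric, G) (Matrix.single μ β 1, 0) * Ric ν β)
        + (∑ β, fderiv ℝ L (Ric, G) (Matrix.single β μ 1, 0) * Ric β ν)
        - (if μ = ν then L (Ric, G) else 0) := by
  obtain rfl : L = lagrangian := hL
  intro μ ν
  set D := fderiv ℝ lagrangian (Ric, G)
  set DG := (D.comp (.inr ℝ _ _)).toLinearMap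
  set DR := (D.comp (.inl ℝ _ _)).toLinearMap
  have hG₁ : ∑ β, D (0, single ν β 1) * G μ β = DG (single ν μ 1 * G) :=
    sum_map_single_mul DG G ν μ
  have hG₂ : ∑ β, D (0, single β ν 1) * G β μ = DG (G * single μ ν 1) :=
    sum_map_mul_single DG G μ ν
  have hR₁ : ∑ β, D (single μ β 1, 0) * Ric ν β = DR (single μ ν 1 * Ric) :=
    sum_map_single_mul DR Ric μ ν
  have hR₂ : ∑ β, D (single β μ 1, 0) * Ric β ν = DR (Ric * single ν μ 1) :=
    sum_map_mul_single DR Ric ν μ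
  have key := fderiv_lagrangian_equivariance (R := Ric) hdet (single ν μ 1)
  simp only [transpose_single, trace_single_one, mul_ite, mul_one, mul_zero] at key
  change DG (_ + _) + _ = DR (_ + _) at key
  rw [map_add, map_add] at key
  rw [hG₁, hG₂, hR₁, hR₂]
  linarith

/-- for quadratic gravity with the Ricci tensor squared, the metric
energy-momentum tensor density equals the canonical one (Eqs. (26a)–(26c)). -/
theorem ricci_squared_emt_identity
    (Ric G : Matrix (Fin 4) (Fin 4) ℝ) (hG : G.IsSymm) (hdet : G.det < 0)
    (L : Matrix (Fin 4) (Fin 4) ℝ × Matrix (Fin 4) (Fin 4) ℝ → ℝ)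
    (hL : L = fun x =>
      (1 / 2) * (∑ η, ∑ α, ∑ ξ, ∑ l, x.1 η α * x.1 ξ l * x.2 η ξ * x.2 α l)
        * (-x.2.det) ^ (-(1 / 2) : ℝ)) :
    ∀ μ ν : Fin 4,
      (∑ β, fderiv ℝ L (Ric, G) (0, Matrix.single ν β 1) * G μ β)
      + (∑ β, fderiv ℝ L (Ric, G) (0, Matrix.single β ν 1) * G β μ)
      = (∑ β, fderiv ℝ L (Ric, G) (Matrix.single μ β 1, 0) * Ric ν β)
        + (∑ β, fderiv ℝ L (Ric, G) (Matrix.single β μ 1, 0) * Ric β ν)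
        - (if μ = ν then L (Ric, G) else 0) :=
  ricci_squared_emt_identity_general Ric G hdet L hL
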